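/- The quantity sqrt(cos(2π/5)/cos(π/5)) + sqrt(cos(π/5)/cos(2π/5)) equals sqrt(5). -/
import Mathlib
open Real
theorem stmt0 : Real.sqrt (cos (2*π/5) / cos (π/5)) + Real.sqrt (cos (π/5) / cos (2*π/5)) = Real.sqrt 5 := by
  have h5 : (1:ℝ) < Real.sqrt 5 := by
    rw [show (1:ℝ) = Real.sqrt 1 by simp]
    exact Real.sqrt_lt_sqrt (by norm_num) (by norm_num)
  have hsq : Real.sqrt 5 ^ 2 = 5 := Real.sq_sqrt (by norm_num)
  have hb : cos (π/5) = (1 + Real.sqrt 5)/4 := Real.cos_pi_div_five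
  have ha : cos (2*π/5) = (Real.sqrt 5 - 1)/4 := by
    rw [show (2*π/5 : ℝ) = 2*(π/5) by ring, Real.cos_two_mul, hb]
    nlinarith [hsq]
  have hbpos : 0 < cos (π/5) := by rw [hb]; linarith
  have hapos : 0 < cos (2*π/5) := by rw [ha]; linarith
  set a := cos (2*π/5)
  set b := cos (π/5)
  have hx : 0 ≤ a / b := le_of_lt (div_pos hapos hbpos)
  have hy : 0 ≤ b / a := le_of_lt (div_pos hbpos hapos)
  have hmul : Real.sqrt (a/b) * Real.sqrt (b/a) = 1 := by
    rw [← Real.sqrt_mul hx]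
    rw [show a/b * (b/a) = 1 by field_simp]
    simp
  have hsum : (Real.sqrt (a/b) + Real.sqrt (b/a))^2 = 5 := by
    have h1 : Real.sqrt (a/b) ^ 2 = a/b := Real.sq_sqrt hx
    have h2 : Real.sqrt (b/a) ^ 2 = b/a := Real.sq_sqrt hy
    have hab : a/b + b/a = 3 := by
      rw [ha, hb]; rw [div_add_div _ _ (by positivity) (by nlinarith)]
      rw [div_eq_iff (by nlinarith)]; nlinarith
    nlinarith [hmul, h1, h2]
  have hnn : 0 ≤ Real.sqrt (a/b) + Real.sqrt (b/a) := by positivity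
  calc Real.sqrt (a/b) + Real.sqrt (b/a)
      = Real.sqrt ((Real.sqrt (a/b) + Real.sqrt (b/a))^2) := (Real.sqrt_sq hnn).symm
    _ = Real.sqrt 5 := by rw [hsum]
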